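/- Let Λ = ℚ[p_1, p_2, …] be the polynomial ring over ℚ in countably many variables p_k indexed by positive integers. Define h_m ∈ Λ by h_0 = 1 and m·h_m = Σ_{i=1}^m p_i·h_{m−i} for m ≥ 1, and for n ≥ 1 let D_n be the unique ℚ-linear derivation of Λ with D_n(p_k) = k^n for all k ≥ 1. Then for all k ≥ 0 and m ≥ 0, the iterates satisfy D_2^k(h_m) = D_1^{2k}(h_{m+k}). -/

import Mathlib

/-!
Write `H(t) = ∑ h_m t^m = exp (∑ p_k t^k / k)`. Then `D_n H(t) = (∑_{i ≥ 1} i^(n-1) t^i) H(t)`,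
i.e. `D_n h_m = ∑_{i=1}^m i^(n-1) h_{m-i}`, which follows from the Newton recurrence by strong
induction. Applying `D_1` twice to `h_{m+1}` counts each `h_{m-s}` exactly `s` times, giving
`D_1² h_{m+1} = D_2 h_m`. Since `D_1` and `D_2` send generators to constants they commute, and
induction on `k` gives `D_2^k h_m = D_1^(2k) h_{m+k}`.
-/

open MvPolynomial Finset

/-- The derivation `D_n` of `Λ = ℚ[p_1, p_2, …]` with `D_n(p_k) = k^n` for all `k ≥ 1`. -/
noncomputable def Dn (n : ℕ) : Derivation ℚ (MvPolynomial ℕ+ ℚ) (MvPolynomial ℕ+ ℚ) :=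
  mkDerivation ℚ fun k : ℕ+ => C (((k : ℕ) : ℚ) ^ n)

theorem Finset.sum_range_succ_sum_range_sub_comp_add {M : Type*} [AddCommMonoid M] (f : ℕ → M)
    (m : ℕ) :
    ∑ i ∈ range (m + 1), ∑ l ∈ range (m - i), f (i + l) = ∑ s ∈ range m, (s + 1) • f s := by
  induction m generalizing f with
  | zero => simp
  | succ m ih =>
    rw [sum_range_succ', sum_range_succ' (fun s => (s + 1) • f s)]
    simp only [Nat.add_sub_add_right, Nat.sub_zero, zero_add, one_smul, add_right_comm _ 1]
    rw [ih (fun s => f (s + 1)), sum_range_succ' f, ← add_assoc, ← sum_add_distrib]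
    simp only [succ_nsmul]

variable {H : ℕ → MvPolynomial ℕ+ ℚ}

theorem newton_rec_of_one_le (Hrec : ∀ m : ℕ, 1 ≤ m → (m : ℚ) • H m =
      ∑ i ∈ range m, X i.succPNat * H (m - (i + 1))) (m : ℕ) :
    (m : ℚ) • H m = ∑ i ∈ range m, X i.succPNat * H (m - (i + 1)) := by
  rcases Nat.eq_zero_or_pos m with rfl | hm
  · simp
  · exact Hrec m hm

theorem derivation_apply_of_newton (D : Derivation ℚ (MvPolynomial ℕ+ ℚ) (MvPolynomial ℕ+ ℚ))
    (c : ℕ → ℚ) (hD : ∀ i : ℕ, D (X i.succPNat) = C ((i + 1 : ℚ) * c i)) (H0 : H 0 = 1)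
    (Hrec : ∀ m : ℕ, (m : ℚ) • H m = ∑ i ∈ range m, X i.succPNat * H (m - (i + 1))) (m : ℕ) :
    D (H m) = ∑ i ∈ range m, c i • H (m - (i + 1)) := by
  induction m using Nat.strong_induction_on with
  | _ m ih =>
  rcases m with _ | m
  · simp [H0]
  refine smul_right_injective _ (by positivity : ((m + 1 : ℕ) : ℚ) ≠ 0) ?_
  have swap : ∑ i ∈ range (m + 1), X i.succPNat * D (H (m - i))
      = ∑ l ∈ range (m + 1), ((m - l : ℕ) : ℚ) • c l • H (m - l) := by
    calc ∑ i ∈ range (m + 1), X i.succPNat * D (H (m - i))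
        = ∑ i ∈ range (m + 1), ∑ l ∈ range (m - i),
            c l • (X i.succPNat * H (m - l - (i + 1))) := by
          refine sum_congr rfl fun i hi => ?_
          rw [ih (m - i) (by grind), mul_sum]
          refine sum_congr rfl fun l _ => ?_
          rw [mul_smul_comm, show m - i - (l + 1) = m - l - (i + 1) by omega]
      _ = ∑ l ∈ range (m + 1),
            c l • ∑ i ∈ range (m - l), X i.succPNat * H (m - l - (i + 1)) := by
          rw [sum_comm' (t' := range (m + 1)) (s' := fun l => range (m - l))
            (fun i l => by simp only [mem_range]; omega)]
          simp only [smul_sum]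
      _ = _ := by
          refine sum_congr rfl fun l _ => ?_
          rw [← Hrec, smul_comm]
  dsimp only
  rw [← D.map_smul, Hrec, map_sum]
  simp only [Derivation.leibniz, hD, sum_add_distrib, Nat.add_sub_add_right, smul_eq_mul, swap,
    smul_sum]
  rw [← sum_add_distrib]
  refine sum_congr rfl fun i hi => ?_
  rw [mul_comm, ← smul_eq_C_mul, smul_smul, smul_smul, ← add_smul]
  congr 1
  push_cast [Nat.cast_sub (by grind : i ≤ m)]
  ring

theorem Dn_succ_apply_of_newton (H0 : H 0 = 1)
    (Hrec : ∀ m : ℕ, (m : ℚ) • H m = ∑ i ∈ range m, X i.succPNat * H (m - (i + 1)))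
    (n m : ℕ) :
    Dn (n + 1) (H m) = ∑ i ∈ range m, ((i + 1 : ℚ) ^ n) • H (m - (i + 1)) := by
  refine derivation_apply_of_newton _ _ (fun i => ?_) H0 Hrec m
  rw [Dn, mkDerivation_X, Nat.succPNat_coe, Nat.cast_succ, pow_succ']

theorem Dn_two_apply_eq_Dn_one_sq_apply_succ (H0 : H 0 = 1)
    (Hrec : ∀ m : ℕ, (m : ℚ) • H m = ∑ i ∈ range m, X i.succPNat * H (m - (i + 1)))
    (m : ℕ) :
    (Dn 2).toLinearMap (H m) = ((Dn 1).toLinearMap ^ 2) (H (m + 1)) := by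
  have D1 := Dn_succ_apply_of_newton H0 Hrec 0
  simp only [pow_zero, one_smul, zero_add] at D1
  rw [pow_two, Module.End.mul_apply]
  simp only [Derivation.coeFn_coe]
  rw [D1, map_sum, Dn_succ_apply_of_newton H0 Hrec 1]
  simp only [D1, pow_one, Nat.add_sub_add_right, Nat.sub_sub, ← add_assoc]
  rw [sum_range_succ_sum_range_sub_comp_add (fun s => H (m - (s + 1)))]
  refine sum_congr rfl fun s _ => ?_
  rw [← Nat.cast_smul_eq_nsmul ℚ, Nat.cast_succ]

theorem Dn_commute (a b : ℕ) : Commute (Dn a).toLinearMap (Dn b).toLinearMap := by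
  rw [commute_iff_lie_eq, ← Derivation.commutator_coe_linear_map]
  suffices ⁅Dn a, Dn b⁆ = 0 by rw [this]; rfl
  refine derivation_ext fun k => ?_
  simp [Derivation.commutator_apply, Dn]

/-- If `h_0 = 1` and `m·h_m = Σ_{i=1}^m p_i·h_{m-i}` for `m ≥ 1`, then
`D_2^k(h_m) = D_1^{2k}(h_{m+k})` for all `k, m ≥ 0`. -/
theorem stmt6 (H : ℕ → MvPolynomial ℕ+ ℚ) (H0 : H 0 = 1)
    (Hrec : ∀ m : ℕ, 1 ≤ m → (m : ℚ) • H m =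
      ∑ i ∈ Finset.range m, X i.succPNat * H (m - (i + 1)))
    (k m : ℕ) :
    ((Dn 2).toLinearMap ^ k) (H m) = ((Dn 1).toLinearMap ^ (2 * k)) (H (m + k)) := by
  have key := Dn_two_apply_eq_Dn_one_sq_apply_succ H0 (newton_rec_of_one_le Hrec)
  induction k generalizing m with
  | zero => simp
  | succ k ih =>
    calc ((Dn 2).toLinearMap ^ (k + 1)) (H m)
        = ((Dn 2).toLinearMap ^ k * (Dn 1).toLinearMap ^ 2) (H (m + 1)) := by
          rw [pow_succ, Module.End.mul_apply, key, Module.End.mul_apply]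
      _ = ((Dn 1).toLinearMap ^ 2) (((Dn 2).toLinearMap ^ k) (H (m + 1))) := by
          rw [((Dn_commute 2 1).pow_pow k 2).eq, Module.End.mul_apply]
      _ = ((Dn 1).toLinearMap ^ (2 * (k + 1))) (H (m + (k + 1))) := by
          rw [ih, ← Module.End.mul_apply, ← pow_add, show 2 + 2 * k = 2 * (k + 1) by ring,
            add_right_comm, add_assoc]
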